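/- Let G be a group, B a G-invariant Boolean algebra of subsets of G satisfying the definability-of-types condition, and S the Stone space of B. Then G is 'extremely amenable for B' (there exists a G-fixed ultrafilter in S) if and only if every left generic Y ∈ B satisfies Y Y⁻¹ = G. -/

import Mathlib

/-- The left translate `gY` of a subset of a group. -/
def LTrans {G : Type*} [Group G] (g : G) (Y : Set G) : Set G := (g * ·) '' Y

/-- `B` is a Boolean algebra of subsets of `G` closed under left translations. -/
def IsInvBoolAlg {G : Type*} [Group G] (B : Set (Set G)) : Prop :=
  Set.univ ∈ B ∧ (∀ Y ∈ B, Yᶜ ∈ B) ∧ (∀ Y ∈ B, ∀ Z ∈ B, Y ∩ Z ∈ B) ∧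
    ∀ (g : G), ∀ Y ∈ B, LTrans g Y ∈ B

/-- `p` is an ultrafilter on the Boolean algebra `B` of subsets. -/
def IsUltraOn {α : Type*} (B p : Set (Set α)) : Prop :=
  p ⊆ B ∧ Set.univ ∈ p ∧ ∅ ∉ p ∧ (∀ Y ∈ p, ∀ Z ∈ p, Y ∩ Z ∈ p) ∧
    (∀ Y ∈ p, ∀ Z ∈ B, Y ⊆ Z → Z ∈ p) ∧ ∀ Y ∈ B, Y ∈ p ∨ Yᶜ ∈ p

/-- `Y` is left generic: finitely many left translates of `Y` cover `G`. -/
def IsLeftGeneric {G : Type*} [Group G] (Y : Set G) : Prop :=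
  ∃ F : Finset G, ⋃ g ∈ F, LTrans g Y = Set.univ

/-- The set `Y · Y⁻¹ = {a b⁻¹ : a, b ∈ Y}`. -/
def MulInvSet {G : Type*} [Group G] (Y : Set G) : Set G :=
  {x | ∃ a ∈ Y, ∃ b ∈ Y, x = a * b⁻¹}

/-- The Stone space of the Boolean algebra `B`: the set of ultrafilters on `B`. -/
abbrev StoneS {α : Type*} (B : Set (Set α)) : Type _ := {p : Set (Set α) // IsUltraOn B p}

/-- The Stone topology, generated by the basic (cl)open sets `{p : Y ∈ p}`, `Y ∈ B`. -/
instance stoneTop {α : Type*} (B : Set (Set α)) : TopologicalSpace (StoneS B) :=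
  TopologicalSpace.generateFrom {U | ∃ Y ∈ B, U = {p : StoneS B | Y ∈ p.1}}

/-- The translation action of `G` on ultrafilters: `Y ∈ g·p ↔ g⁻¹Y ∈ p`. -/
def actUF {G : Type*} [Group G] (g : G) (p : Set (Set G)) : Set (Set G) :=
  {Y | LTrans g⁻¹ Y ∈ p}

/-- `M` is a `G`-subflow of the Stone space: nonempty, closed and `G`-invariant. -/
def IsSubflow {G : Type*} [Group G] (B : Set (Set G)) (M : Set (StoneS B)) : Prop :=
  M.Nonempty ∧ IsClosed M ∧ ∀ (g : G), ∀ q ∈ M, ∃ q' ∈ M, q'.1 = actUF g q.1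

/-- `M` is a minimal `G`-subflow of the Stone space. -/
def IsMinSubflow {G : Type*} [Group G] (B : Set (Set G)) (M : Set (StoneS B)) : Prop :=
  IsSubflow B M ∧ ∀ M' ⊆ M, IsSubflow B M' → M' = M

/-!
(⇒) A fixed ultrafilter containing one translate of a left generic `Y` contains all of
them, so `Y ∩ xY ≠ ∅` for every `x`, i.e. `x ∈ Y Y⁻¹`.

(⇐) Instead of a minimal subflow of the Stone space, take (by Zorn) a finest proper
left-invariant filter `f` on `G` and an ultrafilter `U ≤ f`. For `Z ∈ U`, adjoining all
`(gZ)ᶜ` to `f` keeps it invariant, so by minimality it becomes improper: finitely many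
translates of `Z` cover a set of `f`, which makes `{h : h⁻¹Z ∈ U}` left generic. If some
`Y ∈ U ∩ B` had `gY ∉ U`, apply this to `Z = Y \ gY`: by definability and the hypothesis,
`g⁻¹ = ab⁻¹` with `a⁻¹Z, b⁻¹Z ∈ U`, forcing `g⁻¹Z ∩ Z ≠ ∅`, which is absurd. Hence `U ∩ B`
is a fixed point of the Stone space.
-/

open Filter Set
open scoped Pointwise

section Translates
variable {G : Type*} [Group G]

lemma LTrans_eq_smul (g : G) (Y : Set G) : LTrans g Y = g • Y := rfl

lemma IsInvBoolAlg.smul_mem {B : Set (Set G)} (hB : IsInvBoolAlg B) (g : G) {Y : Set G}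
    (hY : Y ∈ B) : g • Y ∈ B :=
  hB.2.2.2 g Y hY

end Translates

namespace IsUltraOn
variable {α : Type*} {B p : Set (Set α)}

lemma compl_mem_iff (hp : IsUltraOn B p) {Y : Set α} (hY : Y ∈ B) : Yᶜ ∈ p ↔ Y ∉ p := by
  refine ⟨fun hc hY' => hp.2.2.1 ?_, (hp.2.2.2.2.2 Y hY).resolve_left⟩
  simpa using hp.2.2.2.1 _ hY' _ hc

lemma nonempty_of_mem (hp : IsUltraOn B p) {Y : Set α} (hY : Y ∈ p) : Y.Nonempty :=
  nonempty_iff_ne_empty.2 fun h => hp.2.2.1 (h ▸ hY)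

lemma biInter_mem (hp : IsUltraOn B p) {ι : Type*} (F : Finset ι) {Y : ι → Set α}
    (h : ∀ i ∈ F, Y i ∈ p) : ⋂ i ∈ F, Y i ∈ p := by
  classical
  induction F using Finset.induction_on with
  | empty => simpa using hp.2.1
  | insert a F _ ih =>
    rw [Finset.set_biInter_insert]
    exact hp.2.2.2.1 _ (h a (F.mem_insert_self a)) _
      (ih fun i hi => h i (F.mem_insert_of_mem hi))

lemma exists_mem_of_biUnion_eq_univ (hp : IsUltraOn B p) {ι : Type*} {F : Finset ι}
    {Y : ι → Set α} (hYB : ∀ i ∈ F, Y i ∈ B) (hcover : ⋃ i ∈ F, Y i = univ) :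
    ∃ i ∈ F, Y i ∈ p := by
  by_contra! h
  have hempty := hp.biInter_mem F fun i hi => (hp.compl_mem_iff (hYB i hi)).2 (h i hi)
  rw [← compl_iUnion₂, hcover, compl_univ] at hempty
  exact hp.2.2.1 hempty

end IsUltraOn

lemma Ultrafilter.isUltraOn_setOf_mem {α : Type*} {B : Set (Set α)} (huniv : univ ∈ B)
    (hcompl : ∀ Y ∈ B, Yᶜ ∈ B) (hinter : ∀ Y ∈ B, ∀ Z ∈ B, Y ∩ Z ∈ B) (U : Ultrafilter α) :
    IsUltraOn B {Y | Y ∈ B ∧ Y ∈ U} := by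
  refine ⟨fun Y hY => hY.1, ⟨huniv, univ_mem⟩, fun h => U.empty_notMem h.2,
    fun Y hY Z hZ => ⟨hinter Y hY.1 Z hZ.1, inter_mem hY.2 hZ.2⟩,
    fun Y hY Z hZ hYZ => ⟨hZ, mem_of_superset hY.2 hYZ⟩, fun Y hY => ?_⟩
  rcases U.em Y with h | h
  · exact Or.inl ⟨hY, h⟩
  · exact Or.inr ⟨hcompl Y hY, h⟩

lemma mulInvSet_eq_univ_of_forall_actUF_eq {G : Type*} [Group G] {B p : Set (Set G)}
    (hB : IsInvBoolAlg B) (hp : IsUltraOn B p) (hfix : ∀ g : G, actUF g p = p) {Y : Set G}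
    (hY : Y ∈ B) (hgen : IsLeftGeneric Y) : MulInvSet Y = univ := by
  obtain ⟨F, hF⟩ := hgen
  obtain ⟨g, -, hg⟩ := hp.exists_mem_of_biUnion_eq_univ (fun g _ => hB.smul_mem g hY) hF
  have htrans : ∀ x : G, x • Y ∈ p := fun x => by
    have : x • Y ∈ actUF (x * g⁻¹) p := by
      simpa [actUF, LTrans_eq_smul, smul_smul, mul_assoc] using hg
    rwa [hfix] at this
  refine eq_univ_of_forall fun x => ?_
  obtain ⟨a, haY, hax⟩ := hp.nonempty_of_mem (hp.2.2.2.1 _ (htrans 1) _ (htrans x))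
  rw [one_smul] at haY
  exact ⟨a, haY, x⁻¹ * a, mem_smul_set_iff_inv_smul_mem.1 hax, by group⟩

section InvariantFilter
variable {G : Type*} [Group G]

def IsLeftInvariant (f : Filter G) : Prop := ∀ g : G, Tendsto (g • ·) f f

lemma IsLeftInvariant.smul_mem {f : Filter G} (hf : IsLeftInvariant f) (g : G) {X : Set G}
    (hX : X ∈ f) : g • X ∈ f := by
  have h := hf g⁻¹ hX
  rwa [mem_map, preimage_smul, inv_inv] at h

variable (G) in
lemma exists_minimal_neBot_isLeftInvariant :
    ∃ f : Filter G, Minimal (fun f => f.NeBot ∧ IsLeftInvariant f) f := by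
  refine @zorn_le₀ (Filter G)ᵒᵈ _ {f | f.NeBot ∧ IsLeftInvariant f} fun c hcS hc => ?_
  refine ⟨sInf (α := Filter G) c, ⟨?_, fun g => ?_⟩, fun f hf => sInf_le (α := Filter G) hf⟩
  · exact sInf_neBot_of_directed hc.directedOn fun hbot => (hcS hbot).1.ne rfl
  · exact le_sInf fun f hf => (map_mono (sInf_le hf)).trans ((hcS hf).2 g)

lemma Minimal.exists_subset_iUnion_smul {f : Filter G}
    (hf : Minimal (fun f => f.NeBot ∧ IsLeftInvariant f) f) {Z : Set G} (hZ : Zᶜ ∉ f) :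
    ∃ A ∈ f, ∃ F : Finset G, A ⊆ ⋃ g ∈ F, g • Z := by
  set f' := f ⊓ ⨅ g : G, 𝓟 (g • Z)ᶜ
  have hinv : IsLeftInvariant f' := fun h =>
    (hf.1.2 h).inf <| tendsto_iInf.2 fun g => tendsto_iInf' (h⁻¹ * g) <|
      tendsto_principal_principal.2 fun x hx hmem =>
        hx (by simpa [smul_smul] using smul_mem_smul_set (a := h⁻¹) hmem)
  have hbot : f' = ⊥ := by
    by_contra hne
    have hle : f ≤ f' := hf.2 ⟨⟨hne⟩, hinv⟩ inf_le_left
    exact hZ (by simpa using hle (mem_inf_of_right (mem_iInf_of_mem 1 (mem_principal_self _))))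
  obtain ⟨A, hA, V, hV, hAV⟩ := inf_eq_bot_iff.1 hbot
  obtain ⟨F, hF⟩ := (mem_iInf_finite V).1 hV
  rw [iInf_principal_finset, mem_principal, ← compl_iUnion₂] at hF
  exact ⟨A, hA, F, fun x hxA => by_contra fun hx => (hAV ▸ ⟨hxA, hF hx⟩ : x ∈ (∅ : Set G))⟩

lemma isLeftGeneric_setOf_inv_smul_mem {f : Filter G}
    (hf : Minimal (fun f => f.NeBot ∧ IsLeftInvariant f) f) {U : Ultrafilter G} (hU : ↑U ≤ f)
    {Z : Set G} (hZ : Z ∈ U) : IsLeftGeneric {h : G | h⁻¹ • Z ∈ U} := by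
  obtain ⟨A, hA, F, hAF⟩ :=
    hf.exists_subset_iUnion_smul fun hZc => U.compl_notMem_iff.2 hZ (hU hZc)
  refine ⟨F, eq_univ_of_forall fun h => ?_⟩
  have hcover : ⋃ g ∈ F, h⁻¹ • g • Z ∈ U := by
    refine mem_of_superset (hU (hf.1.2.smul_mem h⁻¹ hA)) ?_
    simpa only [smul_set_iUnion₂] using smul_set_mono hAF
  obtain ⟨g, hgF, hg⟩ := (U.finite_biUnion_mem_iff F.finite_toSet).1 hcover
  refine mem_iUnion₂.2 ⟨g, hgF, ?_⟩
  rw [LTrans_eq_smul, mem_smul_set_iff_inv_smul_mem]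
  simpa [smul_smul, mul_assoc] using hg

lemma inter_smul_nonempty_of_mem_mulInvSet {U : Filter G} [U.NeBot] {Z : Set G} {x : G}
    (hx : x ∈ MulInvSet {h : G | h⁻¹ • Z ∈ U}) : (x • Z ∩ Z).Nonempty := by
  obtain ⟨a, ha, b, hb, rfl⟩ := hx
  obtain ⟨y, hya, hyb⟩ := Filter.nonempty_of_mem (inter_mem ha hb)
  exact ⟨a * y, ⟨b * y, mem_inv_smul_set_iff.1 hyb, by simp [smul_eq_mul, mul_assoc]⟩,
    mem_inv_smul_set_iff.1 hya⟩

variable {B : Set (Set G)}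

lemma smul_mem_of_minimal (hB : IsInvBoolAlg B) {f : Filter G}
    (hf : Minimal (fun f => f.NeBot ∧ IsLeftInvariant f) f) {U : Ultrafilter G} (hU : ↑U ≤ f)
    (hdef : ∀ Z ∈ B, {h : G | h⁻¹ • Z ∈ U} ∈ B)
    (hgen : ∀ Y ∈ B, IsLeftGeneric Y → MulInvSet Y = univ) (g : G) {Y : Set G} (hYB : Y ∈ B)
    (hY : Y ∈ U) : g • Y ∈ U := by
  by_contra hgY
  set Z := Y ∩ (g • Y)ᶜ
  have hZB : Z ∈ B := hB.2.2.1 _ hYB _ (hB.2.1 _ (hB.smul_mem g hYB))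
  have hZ : Z ∈ U := inter_mem hY (U.compl_mem_iff_notMem.2 hgY)
  have hD := hgen _ (hdef Z hZB) (isLeftGeneric_setOf_inv_smul_mem hf hU hZ)
  obtain ⟨x, hxg, hxY, -⟩ :=
    inter_smul_nonempty_of_mem_mulInvSet (U := (U : Filter G)) (hD ▸ mem_univ g⁻¹)
  exact (mem_inv_smul_set_iff.1 hxg).2 (smul_mem_smul_set hxY)

lemma actUF_setOf_mem_eq (hB : IsInvBoolAlg B) {U : Set (Set G)}
    (hU : ∀ g : G, ∀ Y ∈ B, Y ∈ U → g • Y ∈ U) (g : G) :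
    actUF g {Y | Y ∈ B ∧ Y ∈ U} = {Y | Y ∈ B ∧ Y ∈ U} := by
  ext Y
  refine ⟨fun ⟨hYB, hY⟩ => ?_, fun ⟨hYB, hY⟩ => ⟨hB.smul_mem _ hYB, hU _ _ hYB hY⟩⟩
  have hgY : g • g⁻¹ • Y ∈ B ∧ g • g⁻¹ • Y ∈ U := ⟨hB.smul_mem g hYB, hU g _ hYB hY⟩
  rwa [smul_inv_smul] at hgY

end InvariantFilter

/-- Pestov-type characterization: under definability of types, `G` has a fixed
ultrafilter in the Stone space of `B` iff every left generic `Y ∈ B` satisfies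
`Y Y⁻¹ = G`. -/
theorem stmt_17 {G : Type*} [Group G] (B : Set (Set G)) (hB : IsInvBoolAlg B)
    (hdef : ∀ p : StoneS B, ∀ Y ∈ B, {h : G | Y ∈ actUF h p.1} ∈ B) :
    (∃ p : StoneS B, ∀ g : G, actUF g p.1 = p.1) ↔
      ∀ Y ∈ B, IsLeftGeneric Y → MulInvSet Y = Set.univ := by
  refine ⟨fun ⟨p, hp⟩ Y hYB hY => mulInvSet_eq_univ_of_forall_actUF_eq hB p.2 hp hYB hY,
    fun hgen => ?_⟩
  obtain ⟨f, hf⟩ := exists_minimal_neBot_isLeftInvariant G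
  have := hf.1.1
  set U := Ultrafilter.of f
  let p : StoneS B := ⟨{Y | Y ∈ B ∧ Y ∈ U}, U.isUltraOn_setOf_mem hB.1 hB.2.1 hB.2.2.1⟩
  have hdefU : ∀ Z ∈ B, {h : G | h⁻¹ • Z ∈ U} ∈ B := fun Z hZ => by
    convert hdef p Z hZ using 1
    ext h
    simp [p, actUF, LTrans_eq_smul, hB.smul_mem _ hZ]
  exact ⟨p, actUF_setOf_mem_eq hB
    (fun g _ hYB hY => smul_mem_of_minimal hB hf (Ultrafilter.of_le f) hdefU hgen g hYB hY)⟩
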